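/- For the matrices Ā and A obtained by splitting the rows of H, the joint condition number satisfies κ([Ā; A]) = κ(H) = sin((3m₁m₂ − 1)π/(6m₁m₂)) / sin(π/(6m₁m₂)), and moreover m/4 ≤ κ(H) < m, where [Ā; A] denotes the matrix obtained by stacking Ā on top of A. -/

import Mathlib

open Real Matrix Finset
open scoped Kronecker

noncomputable section

def Psi (u : ℝ) : ℝ := if u ≤ 0 then 0 else 1 - Real.exp (-u ^ 2)
def Phi (v : ℝ) : ℝ := 4 * Real.arctan v + 2 * π
def zc {d : ℕ} (z : EuclideanSpace ℝ (Fin d)) (j : ℕ) : ℝ :=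
  if h : 1 ≤ j ∧ j - 1 < d then z ⟨j - 1, h.2⟩ else 0
def phi {d : ℕ} (z : EuclideanSpace ℝ (Fin d)) (j : ℕ) : ℝ :=
  if j = 1 then -(Psi 1 * Phi (zc z 1))
  else Psi (-zc z (j - 1)) * Phi (-zc z j) - Psi (zc z (j - 1)) * Phi (zc z j)
def hfun (m i : ℕ) {d : ℕ} (z : EuclideanSpace ℝ (Fin d)) : ℝ :=
  if i ≤ m / 3 then phi z 1 + 3 * ∑ j ∈ Finset.Icc 1 (d / 2), phi z (2 * j)
  else if i ≤ 2 * m / 3 then phi z 1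
  else phi z 1 + 3 * ∑ j ∈ Finset.Icc 1 (d / 2), phi z (2 * j + 1)
def ff (m : ℕ) (Lf ε : ℝ) (i : ℕ) {d : ℕ} (z : EuclideanSpace ℝ (Fin d)) : ℝ :=
  300 * π * ε ^ 2 / (m * Lf) * hfun m i ((Real.sqrt m * Lf / (150 * π * ε)) • z)
def blkN {m d : ℕ} (x : EuclideanSpace ℝ (Fin m × Fin d)) (i : ℕ) :
    EuclideanSpace ℝ (Fin d) :=
  WithLp.toLp 2 fun j => if h : 1 ≤ i ∧ i - 1 < m then x (⟨i - 1, h.2⟩, j) else 0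
def f0 (m : ℕ) (Lf ε : ℝ) {d : ℕ} (x : EuclideanSpace ℝ (Fin m × Fin d)) : ℝ :=
  ∑ i ∈ Finset.Icc 1 m, ff m Lf ε i (blkN x i)
def l1norm {ι : Type*} [Fintype ι] (x : ι → ℝ) : ℝ := ∑ i, |x i|
def Jmat (p : ℕ) : Matrix (Fin (p - 1)) (Fin p) ℝ :=
  Matrix.of fun i j => if j.val = i.val then -1 else if j.val = i.val + 1 then 1 else 0
def Hmat (m d : ℕ) (Lf : ℝ) : Matrix (Fin (m - 1) × Fin d) (Fin m × Fin d) ℝ :=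
  ((m : ℝ) * Lf) • (Jmat m ⊗ₖ (1 : Matrix (Fin d) (Fin d) ℝ))
def Mset (m₁ m₂ : ℕ) : Finset ℕ := (Finset.Icc 1 (3 * m₂ - 1)).image (· * m₁)
def JM (m₁ m₂ : ℕ) : Matrix (Fin (3 * m₂ - 1)) (Fin (3 * m₁ * m₂)) ℝ :=
  Matrix.of fun i j =>
    if j.val + 1 = (i.val + 1) * m₁ then -1
    else if j.val = (i.val + 1) * m₁ then 1 else 0
def Abar (m₁ m₂ d : ℕ) (Lf : ℝ) :
    Matrix (Fin (3 * m₂ - 1) × Fin d) (Fin (3 * m₁ * m₂) × Fin d) ℝ :=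
  ((3 * m₁ * m₂ : ℕ) * Lf) • (JM m₁ m₂ ⊗ₖ (1 : Matrix (Fin d) (Fin d) ℝ))
abbrev MCidx (m₁ m₂ : ℕ) := {k : Fin (3 * m₁ * m₂ - 1) // k.val + 1 ∉ Mset m₁ m₂}
def JMC (m₁ m₂ : ℕ) : Matrix (MCidx m₁ m₂) (Fin (3 * m₁ * m₂)) ℝ :=
  Matrix.of fun k j => Jmat (3 * m₁ * m₂) k.val j
def Amat (m₁ m₂ d : ℕ) (Lf : ℝ) :
    Matrix (MCidx m₁ m₂ × Fin d) (Fin (3 * m₁ * m₂) × Fin d) ℝ :=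
  ((3 * m₁ * m₂ : ℕ) * Lf) • (JMC m₁ m₂ ⊗ₖ (1 : Matrix (Fin d) (Fin d) ℝ))
def mvec {ι κ : Type*} [Fintype κ] (M : Matrix ι κ ℝ) (x : EuclideanSpace ℝ κ) :
    EuclideanSpace ℝ ι :=
  WithLp.toLp 2 fun i => ∑ j, M i j * x j
def sNorm {ι κ : Type*} [Fintype ι] [Fintype κ] [DecidableEq κ] (M : Matrix ι κ ℝ) : ℝ :=
  ‖LinearMap.toContinuousLinearMap (Matrix.toEuclideanLin M)‖
def lamMax {ι : Type*} [Fintype ι] [DecidableEq ι] (M : Matrix ι ι ℝ) : ℝ :=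
  sSup (spectrum ℝ M)
def lamMinPos {ι : Type*} [Fintype ι] [DecidableEq ι] (M : Matrix ι ι ℝ) : ℝ :=
  sInf (spectrum ℝ M ∩ Set.Ioi 0)
def condNum {ι κ : Type*} [Fintype ι] [DecidableEq ι] [Fintype κ] (M : Matrix ι κ ℝ) : ℝ :=
  Real.sqrt (lamMax (M * Mᵀ) / lamMinPos (M * Mᵀ))
def gfun (m₁ m₂ d : ℕ) (β : ℝ) (x : EuclideanSpace ℝ (Fin (3 * m₁ * m₂) × Fin d)) : ℝ :=
  β * ∑ i ∈ Mset m₁ m₂, l1norm (fun j => blkN x i j - blkN x (i + 1) j)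
def gbar (m₁ m₂ d : ℕ) (Lf β : ℝ)
    (y : EuclideanSpace ℝ (Fin (3 * m₂ - 1) × Fin d)) : ℝ :=
  β / ((3 * m₁ * m₂ : ℕ) * Lf) * l1norm y
def IsProx {E : Type*} [NormedAddCommGroup E] [InnerProductSpace ℝ E]
    (η : ℝ) (ψ : E → ℝ) (x p : E) : Prop :=
  ∀ y, ψ p + ‖p - x‖ ^ 2 / (2 * η) ≤ ψ y + ‖y - x‖ ^ 2 / (2 * η)
def subdiff {E : Type*} [NormedAddCommGroup E] [InnerProductSpace ℝ E]
    (ψ : E → ℝ) (x : E) : Set E :=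
  {v | ∀ y, ψ x + (inner ℝ v (y - x) : ℝ) ≤ ψ y}
def suppSub {d : ℕ} (z : EuclideanSpace ℝ (Fin d)) (k : ℕ) : Prop :=
  ∀ j : Fin d, z j ≠ 0 → j.val + 1 ≤ k

/-- x is an ε̂-stationary point of instance 𝒫. -/
def IsStatP (m₁ m₂ d : ℕ) (Lf ε β εh : ℝ)
    (x : EuclideanSpace ℝ (Fin (3 * m₁ * m₂) × Fin d)) : Prop :=
  ∃ γ : EuclideanSpace ℝ (MCidx m₁ m₂ × Fin d), ∃ ξ ∈ subdiff (gfun m₁ m₂ d β) x,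
    ‖gradient (f0 (3 * m₁ * m₂) Lf ε) x + mvec (Amat m₁ m₂ d Lf)ᵀ γ + ξ‖ ≤ εh ∧
    ‖mvec (Amat m₁ m₂ d Lf) x‖ ≤ εh

/-- (x, y) is an ε̂-stationary point of the splitting reformulation (SP). -/
def IsStatSP (m₁ m₂ d : ℕ) (Lf ε β εh : ℝ)
    (x : EuclideanSpace ℝ (Fin (3 * m₁ * m₂) × Fin d))
    (y : EuclideanSpace ℝ (Fin (3 * m₂ - 1) × Fin d)) : Prop :=
  ∃ z₁ : EuclideanSpace ℝ (Fin (3 * m₂ - 1) × Fin d),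
    ∃ z₂ : EuclideanSpace ℝ (MCidx m₁ m₂ × Fin d),
      Metric.infDist 0 ((· - z₁) '' subdiff (gbar m₁ m₂ d Lf β) y) ≤ εh ∧
      ‖gradient (f0 (3 * m₁ * m₂) Lf ε) x + mvec (Abar m₁ m₂ d Lf)ᵀ z₁ +
        mvec (Amat m₁ m₂ d Lf)ᵀ z₂‖ ≤ εh ∧
      ‖y - mvec (Abar m₁ m₂ d Lf) x‖ ≤ εh ∧ ‖mvec (Amat m₁ m₂ d Lf) x‖ ≤ εh

/-- The sequence X follows Algorithm Class 1 on instance 𝒫. -/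
def FollowsAC1 (m₁ m₂ d : ℕ) (Lf ε β : ℝ)
    (X : ℕ → EuclideanSpace ℝ (Fin (3 * m₁ * m₂) × Fin d)) : Prop :=
  X 0 = 0 ∧ ∀ t, 1 ≤ t → ∃ η : ℝ, 0 < η ∧
    ∃ ξ ∈ Submodule.span ℝ (⋃ s ∈ Set.Iio t,
      ({X s, gradient (f0 (3 * m₁ * m₂) Lf ε) (X s),
        mvec ((Amat m₁ m₂ d Lf)ᵀ * Amat m₁ m₂ d Lf) (X s)} :
          Set (EuclideanSpace ℝ (Fin (3 * m₁ * m₂) × Fin d)))),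
      ∃ p, IsProx η (gfun m₁ m₂ d β) ξ p ∧
        X t ∈ Submodule.span ℝ ({ξ, p} : Set (EuclideanSpace ℝ (Fin (3 * m₁ * m₂) × Fin d)))

/-- The pair of sequences (X, Y) follows Algorithm Class 2 on the splitting
reformulation (SP) of instance 𝒫. -/
def FollowsAC2 (m₁ m₂ d : ℕ) (Lf ε β : ℝ)
    (X : ℕ → EuclideanSpace ℝ (Fin (3 * m₁ * m₂) × Fin d))
    (Y : ℕ → EuclideanSpace ℝ (Fin (3 * m₂ - 1) × Fin d)) : Prop :=
  X 0 = 0 ∧ Y 0 = 0 ∧ ∀ t, 1 ≤ t →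
    (X t ∈ Submodule.span ℝ (⋃ s ∈ Set.Iio t,
      ({X s, gradient (f0 (3 * m₁ * m₂) Lf ε) (X s),
        mvec ((Amat m₁ m₂ d Lf)ᵀ * Amat m₁ m₂ d Lf) (X s),
        mvec ((Abar m₁ m₂ d Lf)ᵀ * Abar m₁ m₂ d Lf) (X s),
        mvec (Abar m₁ m₂ d Lf)ᵀ (Y s)} :
          Set (EuclideanSpace ℝ (Fin (3 * m₁ * m₂) × Fin d))))) ∧
    ∃ η : ℝ, 0 < η ∧
      ∃ ξ ∈ Submodule.span ℝ (⋃ s ∈ Set.Iio t,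
        ({Y s, mvec (Abar m₁ m₂ d Lf * (Abar m₁ m₂ d Lf)ᵀ) (Y s),
          mvec (Abar m₁ m₂ d Lf) (X s)} :
            Set (EuclideanSpace ℝ (Fin (3 * m₂ - 1) × Fin d)))),
        ∃ p, IsProx η (gbar m₁ m₂ d Lf β) ξ p ∧
          Y t ∈ Submodule.span ℝ
            ({ξ, p} : Set (EuclideanSpace ℝ (Fin (3 * m₂ - 1) × Fin d)))

section auxspec
variable {q : Type*} [Fintype q] [DecidableEq q]
lemma matrix_mem_spectrum_iff {M : Matrix q q ℝ} {t : ℝ} :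
    t ∈ spectrum ℝ M ↔ ∃ v : q → ℝ, v ≠ 0 ∧ M.mulVec v = t • v := by
  rw [spectrum.mem_iff, Matrix.isUnit_iff_isUnit_det, isUnit_iff_ne_zero, not_not,
      ← Matrix.exists_mulVec_eq_zero_iff]
  refine exists_congr fun v => and_congr_right fun hv => ?_
  rw [Algebra.algebraMap_eq_smul_one, Matrix.sub_mulVec, Matrix.smul_mulVec,
      Matrix.one_mulVec, sub_eq_zero, eq_comm]
end auxspec

lemma Jmat_mulVec (p : ℕ) (x : Fin p → ℝ) (i : Fin (p-1)) :
    (Jmat p).mulVec x i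
      = x ⟨i.val+1, by have := i.isLt; omega⟩ - x ⟨i.val, by have := i.isLt; omega⟩ := by
  have hb : (i.val+1) < p := by have := i.isLt; omega
  have ha : i.val < p := by have := i.isLt; omega
  set a : Fin p := ⟨i.val, ha⟩ with ha'
  set b : Fin p := ⟨i.val+1, hb⟩ with hb'
  have key : ∀ j : Fin p, Jmat p i j * x j
      = (if j = b then x j else 0) - (if j = a then x j else 0) := by
    intro j
    rcases eq_or_ne j a with rfl | hja
    · have : a ≠ b := by simp [ha', hb', Fin.ext_iff]
      simp [Jmat, ha', hb', Fin.ext_iff]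
    · rcases eq_or_ne j b with rfl | hjb
      · have h1 : (b : Fin p).val ≠ i.val := by simp [hb']
        simp [Jmat, hb', ha', h1, Fin.ext_iff, hja]
      · have h1 : j.val ≠ i.val := fun h => hja (Fin.ext h)
        have h2 : j.val ≠ i.val + 1 := fun h => hjb (Fin.ext h)
        simp [Jmat, h1, h2, hja, hjb]
  have : (Jmat p).mulVec x i = ∑ j, Jmat p i j * x j := by
    simp [Matrix.mulVec, dotProduct]
  rw [this]
  simp only [key, Finset.sum_sub_distrib, Finset.sum_ite_eq' Finset.univ]
  simp [ha', hb']

lemma JmatT_mulVec (p : ℕ) (hp : 2 ≤ p) (y : Fin (p-1) → ℝ) (j : Fin p) :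
    (Jmat p)ᵀ.mulVec y j
      = (if h : j.val < p - 1 then -y ⟨j.val, h⟩ else 0)
        + (if h : 1 ≤ j.val then y ⟨j.val - 1, by have := j.isLt; omega⟩ else 0) := by
  have hj2 : j.val - 1 < p - 1 := by have := j.isLt; omega
  have key : ∀ i : Fin (p-1), (Jmat p)ᵀ j i * y i
      = (if h : j.val < p - 1 then (if i = ⟨j.val, h⟩ then -y i else 0) else 0)
        + (if 1 ≤ j.val then (if i = ⟨j.val - 1, hj2⟩ then y i else 0) else 0) := by
    intro i
    have hiv := i.isLt
    rcases eq_or_ne j.val i.val with h1 | h1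
    · have hlt : j.val < p - 1 := h1 ▸ hiv
      rw [dif_pos hlt, if_pos (Fin.ext h1.symm)]
      have hJ : (Jmat p)ᵀ j i = -1 := by simp [Jmat, h1]
      rw [hJ]
      by_cases h2 : 1 ≤ j.val
      · have hne : ¬ (i = (⟨j.val - 1, hj2⟩ : Fin (p-1))) := by
          simp only [Fin.ext_iff]; omega
        simp [h2, hne]
      · simp [h2]
    · rcases eq_or_ne j.val (i.val + 1) with h2 | h2
      · have hone : 1 ≤ j.val := by omega
        have hieq : i = (⟨j.val - 1, hj2⟩ : Fin (p-1)) := by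
          simp only [Fin.ext_iff]; omega
        have hJ : (Jmat p)ᵀ j i = 1 := by simp [Jmat, h1, h2]
        rw [hJ, if_pos hone, if_pos hieq]
        by_cases h3 : j.val < p - 1
        · rw [dif_pos h3, if_neg (by simp only [Fin.ext_iff]; omega)]; ring
        · rw [dif_neg h3]; ring
      · have hJ : (Jmat p)ᵀ j i = 0 := by simp [Jmat, h1, h2]
        rw [hJ]
        have e1 : ∀ h : j.val < p - 1, ¬ (i = (⟨j.val, h⟩ : Fin (p-1))) := by
          intro h; simp only [Fin.ext_iff]; omega
        have e2 : 1 ≤ j.val → ¬ (i = (⟨j.val - 1, hj2⟩ : Fin (p-1))) := by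
          intro h; simp only [Fin.ext_iff]; omega
        by_cases h3 : j.val < p - 1 <;> by_cases h4 : 1 ≤ j.val <;>
          simp [h3, h4, e1, e2]
  have : (Jmat p)ᵀ.mulVec y j = ∑ i, (Jmat p)ᵀ j i * y i := by
    simp [Matrix.mulVec, dotProduct]
  rw [this]
  simp only [key, Finset.sum_add_distrib]
  congr 1
  · by_cases h : j.val < p - 1
    · simp only [dif_pos h]
      rw [Finset.sum_ite_eq' Finset.univ]
      simp
    · simp [h]
  · by_cases h : 1 ≤ j.val
    · simp only [if_pos h, dif_pos h]
      rw [Finset.sum_ite_eq' Finset.univ]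
      simp
    · simp [h]

lemma eigen_N (p : ℕ) (hp : 2 ≤ p) (k : ℕ) (hk1 : 1 ≤ k) (hk : k ≤ p - 1) :
    ∃ v : Fin (p-1) → ℝ, v ≠ 0 ∧
      (Jmat p * (Jmat p)ᵀ).mulVec v
        = (2 - 2 * Real.cos (k * π / p)) • v := by
  have hp0 : (0:ℝ) < p := by positivity
  set θ : ℝ := (k:ℝ) * π / p with hθ
  have hθpos : 0 < θ := by
    apply div_pos (mul_pos (by exact_mod_cast hk1) Real.pi_pos) hp0
  have hθlt : θ < π := by
    rw [hθ, div_lt_iff₀ hp0]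
    have : (k:ℝ) < p := by exact_mod_cast (by omega : k < p)
    nlinarith [Real.pi_pos]
  set s : ℕ → ℝ := fun t => Real.sin (t * θ) with hs
  have hs0 : s 0 = 0 := by simp [hs]
  have hsp : s p = 0 := by
    have : (p:ℝ) * θ = k * π := by
      rw [hθ]; field_simp
    simp [hs, this, Real.sin_nat_mul_pi]
  have key : ∀ t : ℕ, 1 ≤ t → 2 * s t - s (t-1) - s (t+1) = (2 - 2 * Real.cos θ) * s t := by
    intro t ht
    have h1 : ((t-1:ℕ):ℝ) = (t:ℝ) - 1 := by
      have : (1:ℕ) ≤ t := ht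
      push_cast [this]; ring
    simp only [hs, h1]
    push_cast
    rw [show ((t:ℝ) - 1) * θ = t * θ - θ by ring, show ((t:ℝ) + 1) * θ = t * θ + θ by ring,
        Real.sin_sub, Real.sin_add]
    ring
  refine ⟨fun i => s (i.val + 1), ?_, ?_⟩
  · intro hcon
    have h0 : s 1 = 0 := by
      have := congrFun hcon ⟨0, by omega⟩
      simpa using this
    have : Real.sin θ > 0 := Real.sin_pos_of_pos_of_lt_pi hθpos hθlt
    rw [hs] at h0
    simp at h0
    linarith
  · funext i
    have hiv := i.isLt
    rw [← Matrix.mulVec_mulVec, Jmat_mulVec, JmatT_mulVec p hp, JmatT_mulVec p hp]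
    simp only [Fin.val_mk, Pi.smul_apply, smul_eq_mul]
    rw [dif_pos hiv, dif_pos (show 1 ≤ i.val + 1 by omega)]
    have eA : (if h : i.val + 1 < p - 1 then -s (i.val + 1 + 1) else 0) = -s (i.val + 2) := by
      split_ifs with h
      · rfl
      · rw [show i.val + 2 = p from by omega, hsp]; norm_num
    have eB : (if h : 1 ≤ i.val then s (i.val - 1 + 1) else 0) = s i.val := by
      split_ifs with h
      · rw [show i.val - 1 + 1 = i.val from by omega]
      · rw [show i.val = 0 from by omega, hs0]
    rw [eA, eB, show i.val + 1 - 1 + 1 = i.val + 1 from by omega]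
    have hkey := key (i.val + 1) (by omega)
    rw [show i.val + 1 - 1 = i.val from by omega] at hkey
    have : i.val + 1 + 1 = i.val + 2 := by omega
    rw [this] at hkey
    linarith


lemma spectrum_N (p : ℕ) (hp : 2 ≤ p) :
    spectrum ℝ (Jmat p * (Jmat p)ᵀ)
      = (fun k : ℕ => 2 - 2 * Real.cos (k * π / p)) '' (Set.Icc 1 (p-1)) := by
  have hp0 : (0:ℝ) < p := by positivity
  apply Set.Subset.antisymm
  · intro t ht
    by_contra hnot
    obtain ⟨w, hw, hweq⟩ := matrix_mem_spectrum_iff.mp ht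
    classical
    set N := Jmat p * (Jmat p)ᵀ with hN
    set f := N.mulVecLin with hf
    set μ : Option (Fin (p-1)) → ℝ :=
      fun o => o.elim t (fun k => 2 - 2 * Real.cos (((k.val+1 : ℕ) : ℝ) * π / p)) with hμ
    set vs : Option (Fin (p-1)) → (Fin (p-1) → ℝ) :=
      fun o => o.elim w (fun k =>
        (eigen_N p hp (k.val+1) (by omega) (by have := k.isLt; omega)).choose) with hvs
    have heig : ∀ o, Module.End.HasEigenvector f (μ o) (vs o) := by
      rintro (_ | k)
      · exact ⟨Module.End.mem_eigenspace_iff.mpr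
          (by simpa [f, hμ, hvs, Matrix.mulVecLin_apply] using hweq), hw⟩
      · obtain ⟨hne, heq⟩ :=
          (eigen_N p hp (k.val+1) (by omega) (by have := k.isLt; omega)).choose_spec
        exact ⟨Module.End.mem_eigenspace_iff.mpr
          (by simpa [f, hμ, hvs, Matrix.mulVecLin_apply] using heq), hne⟩
    have hmemIcc : ∀ k : Fin (p-1), (((k.val+1 : ℕ):ℝ) * π / p : ℝ) ∈ Set.Icc 0 π := by
      intro k
      constructor
      · positivity
      · rw [div_le_iff₀ hp0]
        have : (((k.val+1 : ℕ)):ℝ) ≤ p := by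
          have := k.isLt; exact_mod_cast (by omega : k.val+1 ≤ p)
        nlinarith [Real.pi_pos]
    have hinj : Function.Injective μ := by
      rintro (_ | k) (_ | k') h
      · rfl
      · exact absurd ⟨k'.val+1, ⟨by omega, by have := k'.isLt; omega⟩, h.symm⟩ hnot
      · exact absurd ⟨k.val+1, ⟨by omega, by have := k.isLt; omega⟩, h⟩ hnot
      · have hc : Real.cos (((k.val+1 : ℕ):ℝ) * π / p)
            = Real.cos (((k'.val+1 : ℕ):ℝ) * π / p) := by
          simp only [hμ, Option.elim] at h
          linarith
        have h2 := Real.injOn_cos (hmemIcc k) (hmemIcc k') hc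
        have h3 : k.val = k'.val := by
          rw [div_left_inj' hp0.ne', mul_left_inj' Real.pi_ne_zero] at h2
          have h4 : k.val + 1 = k'.val + 1 := by exact_mod_cast h2
          omega
        exact congrArg _ (Fin.ext h3)
    have hli := Module.End.eigenvectors_linearIndependent' f μ hinj vs heig
    have hcard := hli.fintype_card_le_finrank
    rw [Module.finrank_fintype_fun_eq_card] at hcard
    simp [Fintype.card_option] at hcard
  · rintro t ⟨k, ⟨hk1, hk2⟩, rfl⟩
    obtain ⟨v, hv, heq⟩ := eigen_N p hp k hk1 hk2
    exact matrix_mem_spectrum_iff.mpr ⟨v, hv, heq⟩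

section aux2
variable {q : Type*} [Fintype q] [DecidableEq q]

lemma matrix_spectrum_smul (c : ℝ) (hc : c ≠ 0) (M : Matrix q q ℝ) :
    spectrum ℝ (c • M) = (fun t => c * t) '' spectrum ℝ M := by
  ext t
  simp only [matrix_mem_spectrum_iff, Set.mem_image]
  constructor
  · rintro ⟨v, hv, h⟩
    rw [Matrix.smul_mulVec] at h
    refine ⟨c⁻¹ * t, ⟨v, hv, ?_⟩, by field_simp⟩
    rw [← inv_smul_smul₀ hc (M.mulVec v), h, smul_smul]
  · rintro ⟨s, ⟨v, hv, h⟩, rfl⟩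
    exact ⟨v, hv, by rw [Matrix.smul_mulVec, h, smul_smul]⟩

lemma matrix_spectrum_kron_one {d : ℕ} (hd : 0 < d) (M : Matrix q q ℝ) :
    spectrum ℝ (M ⊗ₖ (1 : Matrix (Fin d) (Fin d) ℝ)) = spectrum ℝ M := by
  ext t
  simp only [matrix_mem_spectrum_iff]
  have key : ∀ (w : q × Fin d → ℝ) (i : q) (a : Fin d),
      (M ⊗ₖ (1 : Matrix (Fin d) (Fin d) ℝ)).mulVec w (i, a)
        = ∑ k, M i k * w (k, a) := by
    intro w i a
    rw [Matrix.mulVec]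
    rw [show (dotProduct ((M ⊗ₖ (1 : Matrix (Fin d) (Fin d) ℝ)) (i,a)) w)
        = ∑ p : q × Fin d, (M ⊗ₖ (1 : Matrix (Fin d) (Fin d) ℝ)) (i,a) p * w p from rfl]
    rw [Fintype.sum_prod_type]
    refine Finset.sum_congr rfl fun k _ => ?_
    rw [Finset.sum_eq_single a]
    · simp [Matrix.kroneckerMap_apply, Matrix.one_apply]
    · intro b _ hb
      simp [Matrix.kroneckerMap_apply, Matrix.one_apply, hb.symm]
    · simp
  constructor
  · rintro ⟨w, hw, h⟩
    obtain ⟨⟨i₀, a₀⟩, hia⟩ : ∃ p, w p ≠ 0 := by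
      by_contra hcon
      push_neg at hcon
      exact hw (funext fun p => hcon p)
    refine ⟨fun k => w (k, a₀), fun hcon => hia (congrFun hcon i₀), ?_⟩
    funext i
    have := congrFun h (i, a₀)
    rw [key] at this
    simpa [Matrix.mulVec, dotProduct] using this
  · rintro ⟨v, hv, h⟩
    obtain ⟨i₀, hi₀⟩ : ∃ i, v i ≠ 0 := by
      by_contra hcon
      push_neg at hcon
      exact hv (funext fun p => hcon p)
    set a₀ : Fin d := ⟨0, hd⟩
    refine ⟨fun p => if p.2 = a₀ then v p.1 else 0, ?_, ?_⟩
    · intro hcon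
      exact hi₀ (by simpa using congrFun hcon (i₀, a₀))
    · funext ⟨i, a⟩
      rw [key]
      by_cases ha : a = a₀
      · subst ha
        simpa [Matrix.mulVec, dotProduct] using congrFun h i
      · simp [ha]
end aux2

lemma HHT_eq (m d : ℕ) (Lf : ℝ) :
    Hmat m d Lf * (Hmat m d Lf)ᵀ
      = (((m:ℝ)*Lf) * ((m:ℝ)*Lf)) •
          ((Jmat m * (Jmat m)ᵀ) ⊗ₖ (1 : Matrix (Fin d) (Fin d) ℝ)) := by
  rw [Hmat, Matrix.transpose_smul, Matrix.smul_mul, Matrix.mul_smul, smul_smul]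
  congr 1
  rw [← Matrix.kroneckerMap_transpose, Matrix.transpose_one, ← Matrix.mul_kronecker_mul, one_mul]

lemma spectrum_HHT (m d : ℕ) (hm : 2 ≤ m) (hd : 0 < d) (Lf : ℝ) (hLf : 0 < Lf) :
    spectrum ℝ (Hmat m d Lf * (Hmat m d Lf)ᵀ)
      = (fun k : ℕ => (((m:ℝ)*Lf) * ((m:ℝ)*Lf)) * (2 - 2 * Real.cos (k * π / m)))
          '' Set.Icc 1 (m-1) := by
  have hm0 : (0:ℝ) < m := by positivity
  have hc : (((m:ℝ)*Lf) * ((m:ℝ)*Lf)) ≠ 0 := by positivity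
  rw [HHT_eq, matrix_spectrum_smul _ hc, matrix_spectrum_kron_one hd, spectrum_N m hm,
      Set.image_image]

lemma condNum_Hmat (m d : ℕ) (hm : 2 ≤ m) (hd : 0 < d) (Lf : ℝ) (hLf : 0 < Lf) :
    condNum (Hmat m d Lf)
      = Real.sin (((m-1 : ℕ):ℝ) * π / (2*m)) / Real.sin (π / (2*m)) := by
  have hm0 : (0:ℝ) < m := by positivity
  set C : ℝ := ((m:ℝ)*Lf) * ((m:ℝ)*Lf) with hC
  have hCpos : 0 < C := by positivity
  set g : ℕ → ℝ := fun k => C * (2 - 2*Real.cos (k * π / m)) with hg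
  have hspec : spectrum ℝ (Hmat m d Lf * (Hmat m d Lf)ᵀ) = g '' Set.Icc 1 (m-1) :=
    spectrum_HHT m d hm hd Lf hLf
  have hang : ∀ k ∈ Set.Icc 1 (m-1), (0:ℝ) < (k:ℝ) * π / m ∧ (k:ℝ) * π / m < π := by
    rintro k ⟨hk1, hk2⟩
    constructor
    · have : (0:ℝ) < (k:ℝ) := by exact_mod_cast (by omega : 0 < k)
      positivity
    · rw [div_lt_iff₀ hm0]
      have : (k:ℝ) < m := by exact_mod_cast (by omega : k < m)
      nlinarith [Real.pi_pos]
  have hgpos : ∀ k ∈ Set.Icc 1 (m-1), 0 < g k := by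
    intro k hk
    obtain ⟨h1, h2⟩ := hang k hk
    have : Real.cos ((k:ℝ)*π/m) < 1 := by
      have := Real.strictAntiOn_cos (Set.mem_Icc.mpr ⟨le_refl 0, Real.pi_pos.le⟩)
        (Set.mem_Icc.mpr ⟨h1.le, h2.le⟩) h1
      simpa using this
    have h3 : 0 < 2 - 2*Real.cos ((k:ℝ)*π/m) := by linarith
    exact mul_pos hCpos h3
  have hmono : ∀ k ∈ Set.Icc 1 (m-1), ∀ k' ∈ Set.Icc 1 (m-1), k ≤ k' → g k ≤ g k' := by
    rintro k hk k' hk' hkk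
    have h1 := (hang k hk).1
    have h2 := (hang k' hk').2
    have hle : (k:ℝ) * π / m ≤ (k':ℝ) * π / m := by
      have hkr : (k:ℝ) ≤ (k':ℝ) := by exact_mod_cast hkk
      gcongr
    have := Real.cos_le_cos_of_nonneg_of_le_pi h1.le h2.le hle
    have : 2 - 2*Real.cos ((k:ℝ)*π/m) ≤ 2 - 2*Real.cos ((k':ℝ)*π/m) := by linarith
    exact mul_le_mul_of_nonneg_left this hCpos.le
  have hmem1 : (1:ℕ) ∈ Set.Icc 1 (m-1) := ⟨le_refl 1, by omega⟩
  have hmemtop : (m-1) ∈ Set.Icc 1 (m-1) := ⟨by omega, le_refl _⟩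
  have hfin : (g '' Set.Icc 1 (m-1)).Finite := (Set.finite_Icc _ _).image g
  have hmax : lamMax (Hmat m d Lf * (Hmat m d Lf)ᵀ) = g (m-1) := by
    rw [lamMax, hspec]
    apply le_antisymm
    · apply csSup_le ⟨g (m-1), Set.mem_image_of_mem g hmemtop⟩
      rintro y ⟨k, hk, rfl⟩
      exact hmono k hk (m-1) hmemtop hk.2
    · exact le_csSup hfin.bddAbove (Set.mem_image_of_mem g hmemtop)
  have hmin : lamMinPos (Hmat m d Lf * (Hmat m d Lf)ᵀ) = g 1 := by
    rw [lamMinPos, hspec]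
    have hsub : g '' Set.Icc 1 (m-1) ∩ Set.Ioi 0 = g '' Set.Icc 1 (m-1) := by
      apply Set.inter_eq_self_of_subset_left
      rintro y ⟨k, hk, rfl⟩
      exact hgpos k hk
    rw [hsub]
    apply le_antisymm
    · exact csInf_le hfin.bddBelow (Set.mem_image_of_mem g hmem1)
    · apply le_csInf ⟨g 1, Set.mem_image_of_mem g hmem1⟩
      rintro y ⟨k, hk, rfl⟩
      exact hmono 1 hmem1 k hk hk.1
  rw [condNum, hmax, hmin]
  have htrig : ∀ θ:ℝ, 2 - 2*Real.cos θ = 4 * Real.sin (θ/2)^2 := by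
    intro θ
    have h := Real.sin_sq_eq_half_sub (θ/2)
    rw [show 2*(θ/2) = θ by ring] at h
    linarith
  have hs1 : 0 < Real.sin (((m-1:ℕ):ℝ) * π / (2*m)) := by
    apply Real.sin_pos_of_pos_of_lt_pi
    · have : (0:ℝ) < ((m-1:ℕ):ℝ) := by exact_mod_cast (by omega : 0 < m - 1)
      positivity
    · rw [div_lt_iff₀ (by positivity)]
      have : ((m-1:ℕ):ℝ) < 2*m := by exact_mod_cast (by omega : m - 1 < 2*m)
      nlinarith [Real.pi_pos]
  have hs2 : 0 < Real.sin (π / (2*m)) := by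
    apply Real.sin_pos_of_pos_of_lt_pi
    · positivity
    · rw [div_lt_iff₀ (by positivity)]
      nlinarith [Real.pi_pos, (show (1:ℝ) ≤ m by exact_mod_cast (by omega : 1 ≤ m))]
  have e1 : g (m-1) = C * (4 * Real.sin (((m-1:ℕ):ℝ) * π / (2*m))^2) := by
    simp only [hg]
    rw [htrig, show (((m-1:ℕ):ℝ)*π/(m:ℝ))/2 = ((m-1:ℕ):ℝ)*π/(2*(m:ℝ)) by ring]
  have e2 : g 1 = C * (4 * Real.sin (π / (2*m))^2) := by
    simp only [hg, Nat.cast_one, one_mul]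
    rw [htrig, show ((π/(m:ℝ))/2 : ℝ) = π/(2*(m:ℝ)) by ring]
  rw [e1, e2]
  rw [show C * (4 * Real.sin (((m-1:ℕ):ℝ) * π / (2*m))^2) / (C * (4 * Real.sin (π / (2*m))^2))
      = (Real.sin (((m-1:ℕ):ℝ) * π / (2*m)) / Real.sin (π / (2*m)))^2 by
    field_simp]
  exact Real.sqrt_sq (by positivity)


lemma cond_bounds (m : ℕ) (hm : 6 ≤ m) :
    (m:ℝ)/4 ≤ Real.sin (((m-1 : ℕ):ℝ) * π / (2*m)) / Real.sin (π / (2*m)) ∧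
    Real.sin (((m-1 : ℕ):ℝ) * π / (2*m)) / Real.sin (π / (2*m)) < m := by
  have hm0 : (0:ℝ) < m := by positivity
  have hm6 : (6:ℝ) ≤ m := by exact_mod_cast hm
  set x : ℝ := π / (2*m) with hx
  have hxpos : 0 < x := by positivity
  have hxlt : x < π/2 := by
    rw [hx]
    apply div_lt_div_of_pos_left Real.pi_pos two_pos
    linarith
  have hnum : Real.sin (((m-1:ℕ):ℝ) * π / (2*m)) = Real.cos x := by
    rw [show ((m-1:ℕ):ℝ) = (m:ℝ) - 1 by
      push_cast [(by omega : 1 ≤ m)]; ring]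
    rw [show ((m:ℝ)-1)*π/(2*m) = π/2 - x by rw [hx]; field_simp]
    exact Real.sin_pi_div_two_sub x
  have hcosx : 0 < Real.cos x := Real.cos_pos_of_mem_Ioo ⟨by linarith, hxlt⟩
  have hsinx : 0 < Real.sin x :=
    Real.sin_pos_of_pos_of_lt_pi hxpos (hxlt.trans (by linarith [Real.pi_pos]))
  have htan := Real.lt_tan hxpos hxlt
  rw [Real.tan_eq_sin_div_cos] at htan
  have hxcos : x * Real.cos x < Real.sin x := by
    rw [lt_div_iff₀ hcosx] at htan; linarith
  have hmx : (m:ℝ) * x = π/2 := by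
    rw [hx]; field_simp
  have hsin_le : Real.sin x ≤ x := Real.sin_le hxpos.le
  have hcos_half : 1/2 ≤ Real.cos x := by
    have h4 : x ≤ π/4 := by
      rw [hx]
      apply div_le_div_of_nonneg_left Real.pi_pos.le (by norm_num)
      linarith
    have h5 := Real.cos_le_cos_of_nonneg_of_le_pi hxpos.le
      (by linarith [Real.pi_pos] : π/4 ≤ π) h4
    rw [Real.cos_pi_div_four] at h5
    have h6 : (1:ℝ) ≤ Real.sqrt 2 := by
      nlinarith [Real.sq_sqrt (by norm_num : (0:ℝ) ≤ 2), Real.sqrt_nonneg 2]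
    linarith
  rw [hnum]
  constructor
  · rw [div_le_div_iff₀ (by norm_num) hsinx]
    have h1 : (m:ℝ) * Real.sin x ≤ (m:ℝ) * x :=
      mul_le_mul_of_nonneg_left hsin_le hm0.le
    have := Real.pi_le_four
    nlinarith
  · rw [div_lt_iff₀ hsinx]
    have h1 : (m:ℝ) * (x * Real.cos x) < (m:ℝ) * Real.sin x :=
      mul_lt_mul_of_pos_left hxcos hm0
    have h2 : (m:ℝ) * (x * Real.cos x) = (π/2) * Real.cos x := by
      rw [← hmx]; ring
    have h3 := Real.pi_gt_three
    nlinarith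

lemma psi_lt (m₁ m₂ : ℕ) (hm₁ : 2 ≤ m₁) (hm₂ : 1 ≤ m₂) (i : Fin (3*m₂-1)) :
    (i.val+1)*m₁ - 1 < 3*m₁*m₂-1 := by
  have hi := i.isLt
  have h1 : (i.val+1)*m₁ ≤ (3*m₂-1)*m₁ := Nat.mul_le_mul_right _ (by omega)
  have h2 : (3*m₂-1)*m₁ = 3*m₁*m₂ - m₁ := by
    rw [Nat.sub_mul, one_mul, mul_right_comm]
  have h3 : 3*m₁ ≤ 3*m₁*m₂ := Nat.le_mul_of_pos_right _ (by omega)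
  have h4 : (0:ℕ) < (i.val+1)*m₁ := Nat.mul_pos (by omega) (by omega)
  omega

lemma psi_mem (m₁ m₂ : ℕ) (hm₁ : 2 ≤ m₁) (hm₂ : 1 ≤ m₂) (i : Fin (3*m₂-1)) :
    ((i.val+1)*m₁ - 1) + 1 ∈ Mset m₁ m₂ := by
  have h4 : (0:ℕ) < (i.val+1)*m₁ := Nat.mul_pos (by omega) (by omega)
  have : ((i.val+1)*m₁ - 1) + 1 = (i.val+1)*m₁ := by omega
  rw [this, Mset]
  exact Finset.mem_image.mpr ⟨i.val+1, Finset.mem_Icc.mpr ⟨by omega, by have := i.isLt; omega⟩, rfl⟩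

def rowEquiv (m₁ m₂ : ℕ) (hm₁ : 2 ≤ m₁) (hm₂ : 1 ≤ m₂) :
    (Fin (3*m₂-1) ⊕ MCidx m₁ m₂) ≃ Fin (3*m₁*m₂-1) :=
  Equiv.ofBijective
    (Sum.elim (fun i => (⟨(i.val+1)*m₁ - 1, psi_lt m₁ m₂ hm₁ hm₂ i⟩ : Fin (3*m₁*m₂-1)))
      (fun k => k.1)) <| by
    constructor
    · rintro (i | k) (j | l) h
      · simp only [Sum.elim_inl, Fin.mk.injEq] at h
        have h4 : (0:ℕ) < (i.val+1)*m₁ := Nat.mul_pos (by omega) (by omega)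
        have h5 : (0:ℕ) < (j.val+1)*m₁ := Nat.mul_pos (by omega) (by omega)
        have h6 : (i.val+1)*m₁ = (j.val+1)*m₁ := by omega
        have h7 : i.val+1 = j.val+1 := Nat.eq_of_mul_eq_mul_right (by omega) h6
        exact congrArg _ (Fin.ext (by omega))
      · exfalso
        simp only [Sum.elim_inl, Sum.elim_inr] at h
        have := psi_mem m₁ m₂ hm₁ hm₂ i
        rw [show ((i.val+1)*m₁ - 1) = (l.1 : Fin (3*m₁*m₂-1)).val from congrArg Fin.val h] at this
        exact l.2 this
      · exfalso
        simp only [Sum.elim_inl, Sum.elim_inr] at h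
        have := psi_mem m₁ m₂ hm₁ hm₂ j
        rw [show ((j.val+1)*m₁ - 1) = (k.1 : Fin (3*m₁*m₂-1)).val from congrArg Fin.val h.symm]
          at this
        exact k.2 this
      · simp only [Sum.elim_inr] at h
        exact congrArg _ (Subtype.ext h)
    · intro r
      by_cases h : r.val + 1 ∈ Mset m₁ m₂
      · rw [Mset] at h
        obtain ⟨i, hi, hieq⟩ := Finset.mem_image.mp h
        rw [Finset.mem_Icc] at hi
        refine ⟨Sum.inl ⟨i-1, by omega⟩, ?_⟩
        simp only [Sum.elim_inl]
        apply Fin.ext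
        simp only [Fin.val_mk]
        rw [show (i - 1 + 1) = i from by omega]
        omega
      · exact ⟨Sum.inr ⟨r, h⟩, rfl⟩

lemma JM_eq_Jmat (m₁ m₂ : ℕ) (hm₁ : 2 ≤ m₁) (hm₂ : 1 ≤ m₂) (i : Fin (3*m₂-1))
    (j : Fin (3*m₁*m₂)) :
    JM m₁ m₂ i j
      = Jmat (3*m₁*m₂) ⟨(i.val+1)*m₁ - 1, psi_lt m₁ m₂ hm₁ hm₂ i⟩ j := by
  have h4 : (0:ℕ) < (i.val+1)*m₁ := Nat.mul_pos (by omega) (by omega)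
  simp only [JM, Jmat, Matrix.of_apply, Fin.val_mk]
  have h5 : (i.val+1)*m₁ - 1 + 1 = (i.val+1)*m₁ := Nat.sub_add_cancel h4
  have hiff : (j.val = (i.val+1)*m₁ - 1) ↔ (j.val + 1 = (i.val+1)*m₁) :=
    ⟨fun h => by rw [h]; exact h5, fun h => Nat.eq_sub_of_add_eq h⟩
  rw [h5]
  by_cases h1 : j.val + 1 = (i.val+1)*m₁
  · rw [if_pos h1, if_pos (hiff.mpr h1)]
  · rw [if_neg h1, if_neg (fun h => h1 (hiff.mp h))]

def rowEquivP (m₁ m₂ d : ℕ) (hm₁ : 2 ≤ m₁) (hm₂ : 1 ≤ m₂) :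
    ((Fin (3*m₂-1) × Fin d) ⊕ (MCidx m₁ m₂ × Fin d)) ≃ (Fin (3*m₁*m₂-1) × Fin d) :=
  (Equiv.sumProdDistrib _ _ _).symm.trans
    ((rowEquiv m₁ m₂ hm₁ hm₂).prodCongr (Equiv.refl (Fin d)))

lemma fromRows_eq_submatrix (m₁ m₂ d : ℕ) (hm₁ : 2 ≤ m₁) (hm₂ : 1 ≤ m₂) (Lf : ℝ) :
    Matrix.fromRows (Abar m₁ m₂ d Lf) (Amat m₁ m₂ d Lf)
      = (Hmat (3*m₁*m₂) d Lf).submatrix (rowEquivP m₁ m₂ d hm₁ hm₂) id := by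
  ext q c
  rcases q with ⟨i, a⟩ | ⟨k, a⟩
  · have hE : (rowEquivP m₁ m₂ d hm₁ hm₂) (Sum.inl (i, a))
        = (⟨(i.val+1)*m₁ - 1, psi_lt m₁ m₂ hm₁ hm₂ i⟩, a) := by
      simp [rowEquivP, rowEquiv, Equiv.sumProdDistrib]
      rfl
    rw [Matrix.submatrix_apply, hE]
    simp only [Matrix.fromRows_apply_inl, Abar, Hmat, Matrix.smul_apply,
      Matrix.kroneckerMap_apply, id_eq]
    rw [JM_eq_Jmat m₁ m₂ hm₁ hm₂]
  · have hE : (rowEquivP m₁ m₂ d hm₁ hm₂) (Sum.inr (k, a)) = (k.1, a) := by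
      simp [rowEquivP, rowEquiv, Equiv.sumProdDistrib]
      rfl
    rw [Matrix.submatrix_apply, hE]
    simp only [Matrix.fromRows_apply_inr, Amat, Hmat, Matrix.smul_apply,
      Matrix.kroneckerMap_apply, id_eq, JMC]
    rfl

lemma condNum_fromRows (m₁ m₂ d : ℕ) (hm₁ : 2 ≤ m₁) (hm₂ : 1 ≤ m₂) (Lf : ℝ) :
    condNum (Matrix.fromRows (Abar m₁ m₂ d Lf) (Amat m₁ m₂ d Lf))
      = condNum (Hmat (3*m₁*m₂) d Lf) := by
  classical
  set E := rowEquivP m₁ m₂ d hm₁ hm₂ with hE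
  set H := Hmat (3*m₁*m₂) d Lf with hH
  have hB := fromRows_eq_submatrix m₁ m₂ d hm₁ hm₂ Lf
  rw [condNum, condNum, hB]
  have h1 : (H.submatrix ⇑E id) * (H.submatrix ⇑E id)ᵀ
      = (H * Hᵀ).submatrix ⇑E ⇑E := by
    rw [Matrix.transpose_submatrix]
    rw [show (id : Fin (3*m₁*m₂) × Fin d → Fin (3*m₁*m₂) × Fin d)
        = ⇑(Equiv.refl (Fin (3*m₁*m₂) × Fin d)) from rfl]
    rw [Matrix.submatrix_mul_equiv]
  rw [h1]
  have h2 : spectrum ℝ ((H * Hᵀ).submatrix ⇑E ⇑E) = spectrum ℝ (H * Hᵀ) := by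
    have h3 : (H * Hᵀ).submatrix ⇑E ⇑E
        = (Matrix.reindexAlgEquiv ℝ ℝ E.symm) (H * Hᵀ) := by
      rw [Matrix.reindexAlgEquiv_apply, Matrix.reindex_apply]
      simp
    rw [h3, AlgEquiv.spectrum_eq]
  rw [lamMax, lamMax, lamMinPos, lamMinPos, h2]


/-- κ([Ā; A]) = κ(H) = sin((3m₁m₂−1)π/(6m₁m₂))/sin(π/(6m₁m₂)), and m/4 ≤ κ(H) < m. -/
theorem stmt_4 (Lf : ℝ) (hLf : 0 < Lf)
    (m₁ m₂ : ℕ) (hm₁ : 2 ≤ m₁) (hm₂ : 1 ≤ m₂) (heven : Even (m₁ * m₂))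
    (d : ℕ) (hd : 5 ≤ d) (hodd : Odd d) :
    condNum (Matrix.fromRows (Abar m₁ m₂ d Lf) (Amat m₁ m₂ d Lf)) =
      condNum (Hmat (3 * m₁ * m₂) d Lf) ∧
    condNum (Hmat (3 * m₁ * m₂) d Lf) =
      Real.sin (((3 * m₁ * m₂ - 1 : ℕ) : ℝ) * π / (6 * m₁ * m₂)) /
        Real.sin (π / (6 * m₁ * m₂)) ∧
    (3 * m₁ * m₂ : ℝ) / 4 ≤ condNum (Hmat (3 * m₁ * m₂) d Lf) ∧
    condNum (Hmat (3 * m₁ * m₂) d Lf) < (3 * m₁ * m₂ : ℝ) := by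
  have h6 : 6 ≤ 3*m₁*m₂ := by
    have h := Nat.mul_le_mul (Nat.mul_le_mul (le_refl 3) hm₁) hm₂
    simpa using h
  have hm2 : 2 ≤ 3*m₁*m₂ := le_trans (by norm_num) h6
  have hd0 : 0 < d := by omega
  have hform := condNum_Hmat (3*m₁*m₂) d hm2 hd0 Lf hLf
  have hcast2 : (2:ℝ) * ((3*m₁*m₂ : ℕ):ℝ) = 6 * m₁ * m₂ := by push_cast; ring
  have hcastm : ((3*m₁*m₂ : ℕ):ℝ) = 3 * m₁ * m₂ := by push_cast; ring
  refine ⟨condNum_fromRows m₁ m₂ d hm₁ hm₂ Lf, ?_, ?_, ?_⟩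
  · rw [hform, hcast2]
  · rw [hform, ← hcastm]
    exact (cond_bounds (3*m₁*m₂) h6).1
  · rw [hform, ← hcastm]
    exact (cond_bounds (3*m₁*m₂) h6).2

end
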